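/- arXiv:2306.17512 — 2 statements merged into one kernel-verified Lean document; each statement's English description precedes it below -/
import Mathlib

section
/- The extremal Kerr horizon data satisfies the horizon Einstein equation with zero cosmological constant: on the surface with coordinates (x, φ), x ∈ (-1,1), with metric g = a²(1+x²)/(1-x²) dx² + 4a²(1-x²)/(1+x²) dφ² and one-form X♭ = (K♭ - dΓ)/Γ where Γ = (1+x²)/2 and K = (1/(2a²)) ∂_φ, the equation Ric(g) = ½ X♭ ⊗ X♭ - ½ L_X g holds, where X is the vector field g-dual to X♭. -/
noncomputable section

open scoped BigOperators

/-- Partial derivative of a function on `ℝⁿ` in the `i`-th coordinate direction. -/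
def pd {n : ℕ} (i : Fin n) (f : (Fin n → ℝ) → ℝ) (x : Fin n → ℝ) : ℝ :=
  fderiv ℝ f x (Pi.single i 1)

/-- Christoffel symbols `Γ^k_{ij}` of a metric `g` with inverse `ginv`. -/
def christoffel {n : ℕ} (g ginv : (Fin n → ℝ) → Matrix (Fin n) (Fin n) ℝ)
    (k i j : Fin n) (x : Fin n → ℝ) : ℝ :=
  (1/2) * ∑ l, ginv x k l *
    (pd i (fun y => g y j l) x + pd j (fun y => g y i l) x - pd l (fun y => g y i j) x)

/-- Ricci tensor `R_{ij}` in coordinates. -/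
def ricci {n : ℕ} (g ginv : (Fin n → ℝ) → Matrix (Fin n) (Fin n) ℝ)
    (i j : Fin n) (x : Fin n → ℝ) : ℝ :=
  (∑ k, pd k (christoffel g ginv k i j) x)
  - (∑ k, pd j (christoffel g ginv k i k) x)
  + (∑ k, ∑ l, christoffel g ginv k k l x * christoffel g ginv l i j x)
  - (∑ k, ∑ l, christoffel g ginv k j l x * christoffel g ginv l i k x)

/-- Covariant derivative `∇_a ω_b` of a one-form. -/
def covd {n : ℕ} (g ginv : (Fin n → ℝ) → Matrix (Fin n) (Fin n) ℝ)
    (ω : Fin n → (Fin n → ℝ) → ℝ) (a b : Fin n) (x : Fin n → ℝ) : ℝ :=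
  pd a (ω b) x - ∑ c, christoffel g ginv c a b x * ω c x

/-- Raise the index of a one-form, producing vector-field components. -/
def raise {n : ℕ} (ginv : (Fin n → ℝ) → Matrix (Fin n) (Fin n) ℝ)
    (ω : Fin n → (Fin n → ℝ) → ℝ) (a : Fin n) (x : Fin n → ℝ) : ℝ :=
  ∑ b, ginv x a b * ω b x

/-- Lie derivative `(L_V g)_{ij}` of the metric along a vector field `V`. -/
def lieMetric {n : ℕ} (g : (Fin n → ℝ) → Matrix (Fin n) (Fin n) ℝ)
    (V : Fin n → (Fin n → ℝ) → ℝ) (i j : Fin n) (x : Fin n → ℝ) : ℝ :=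
  (∑ k, V k x * pd k (fun y => g y i j) x)
  + (∑ k, g x k j * pd i (V k) x) + (∑ k, g x i k * pd j (V k) x)

/-- The horizon Einstein equation `Ric = ½ X♭⊗X♭ − ½ L_X g + λ g` at a point,
for the one-form `ω = X♭` (with `X` its `g`-dual vector field). -/
def HorizonEq {n : ℕ} (g ginv : (Fin n → ℝ) → Matrix (Fin n) (Fin n) ℝ)
    (ω : Fin n → (Fin n → ℝ) → ℝ) (lam : ℝ) (x : Fin n → ℝ) : Prop :=
  ∀ i j, ricci g ginv i j x =
    (1/2) * ω i x * ω j x - (1/2) * lieMetric g (raise ginv ω) i j x + lam * g x i j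

namespace Kerr

variable (a : ℝ)

/-- The extremal Kerr horizon metric $g = a²(1+x²)/(1-x²)\,dx² + 4a²(1-x²)/(1+x²)\,dφ²$
in coordinates $p = (x, φ)$. -/
def kerrMetric (p : Fin 2 → ℝ) : Matrix (Fin 2) (Fin 2) ℝ :=
  !![a^2 * (1 + (p 0)^2) / (1 - (p 0)^2), 0;
     0, 4 * a^2 * (1 - (p 0)^2) / (1 + (p 0)^2)]

/-- The inverse of the extremal Kerr horizon metric. -/
def kerrMetricInv (p : Fin 2 → ℝ) : Matrix (Fin 2) (Fin 2) ℝ :=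
  !![(1 - (p 0)^2) / (a^2 * (1 + (p 0)^2)), 0;
     0, (1 + (p 0)^2) / (4 * a^2 * (1 - (p 0)^2))]

/-- $Γ = (1+x²)/2$. -/
def kerrGamma (p : Fin 2 → ℝ) : ℝ := (1 + (p 0)^2) / 2

/-- The vector field $K = (1/(2a²)) ∂_φ$. -/
def kerrK : Fin 2 → (Fin 2 → ℝ) → ℝ :=
  ![fun _ => 0, fun _ => 1 / (2 * a^2)]

/-- The one-form $K^♭$, the $g$-dual of $K$. -/
def kerrKflat (i : Fin 2) (p : Fin 2 → ℝ) : ℝ :=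
  ∑ j, kerrMetric a p i j * kerrK a j p

/-- The one-form $X^♭ = (K^♭ - dΓ)/Γ$. -/
def kerrXflat (i : Fin 2) (p : Fin 2 → ℝ) : ℝ :=
  (kerrKflat a i p - pd i kerrGamma p) / kerrGamma p

end Kerr

/-! The metric `E(x) dx² + G(x) dφ²` and the one-form `X♭` depend on `x` alone, so only
`Γ⁰₀₀, Γ⁰₁₁, Γ¹₀₁ = Γ¹₁₀` survive and the Ricci tensor is `K g`, with `K` given by Gauss's
formula; for the extremal Kerr horizon (where `EG = 4a⁴`) it is `K = 2(1 - 3x²)/(a²(1+x²)³)`.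
Here `X♭ = -2x/(1+x²) dx + 4(1-x²)/(1+x²)² dφ` and `X = (-2x(1-x²), 1+x²) / (a²(1+x²)²)`, so
`L_X g` is explicit as well, and the horizon equation reduces to three rational identities in `x`.
-/

open Filter Topology

theorem one_sub_sq_ne_zero_of_mem_Ioo {t : ℝ} (ht : t ∈ Set.Ioo (-1 : ℝ) 1) : 1 - t ^ 2 ≠ 0 := by
  nlinarith [ht.1, ht.2]

section PartialDerivative

variable {n : ℕ} {f : ℝ → ℝ} {f' : ℝ} {y : Fin n → ℝ}

theorem pd_congr_of_eventuallyEq {F H : (Fin n → ℝ) → ℝ} (h : F =ᶠ[𝓝 y] H) (i : Fin n) :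
    pd i F y = pd i H y := by
  rw [pd, pd, h.fderiv_eq]

theorem pd_comp_apply_self {j : Fin n} (hf : HasDerivAt f f' (y j)) :
    pd j (fun z => f (z j)) y = f' := by
  have h : HasFDerivAt (fun z : Fin n → ℝ => f (z j)) (f' • ContinuousLinearMap.proj (R := ℝ) j) y :=
    hf.comp_hasFDerivAt y (hasFDerivAt_apply j y)
  simp [pd, h.fderiv]

theorem pd_comp_apply_of_ne {i j : Fin n} (hij : i ≠ j) (f : ℝ → ℝ) :
    pd i (fun z => f (z j)) y = 0 := by
  by_cases hf : DifferentiableAt ℝ f (y j)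
  · have h : HasFDerivAt (fun z : Fin n → ℝ => f (z j))
        (deriv f (y j) • ContinuousLinearMap.proj (R := ℝ) j) y :=
      hf.hasDerivAt.comp_hasFDerivAt y (hasFDerivAt_apply j y)
    simp [pd, h.fderiv, hij.symm]
  · -- `f` is recovered from `z ↦ f (z j)` along the affine line `t ↦ update y j t`
    have hnd : ¬ DifferentiableAt ℝ (fun z : Fin n → ℝ => f (z j)) y := by
      intro hF
      apply hf
      have hline := (hasFDerivAt_update (𝕜 := ℝ) y (i := j) (y j)).differentiableAt
      rw [← Function.update_eq_self j y] at hF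
      simpa [Function.comp_def] using hF.comp (y j) hline
    simp [pd, fderiv_zero_of_not_differentiableAt hnd]

theorem pd_const (c : ℝ) (i : Fin n) : pd i (fun _ => c) y = 0 := by
  simp [pd]

end PartialDerivative

section DiagonalMetric

variable {E G : ℝ → ℝ} {p : Fin 2 → ℝ}

def diagMetric (E G : ℝ → ℝ) (p : Fin 2 → ℝ) : Matrix (Fin 2) (Fin 2) ℝ :=
  !![E (p 0), 0; 0, G (p 0)]

def diagMetricInv (E G : ℝ → ℝ) (p : Fin 2 → ℝ) : Matrix (Fin 2) (Fin 2) ℝ :=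
  !![(E (p 0))⁻¹, 0; 0, (G (p 0))⁻¹]

def diagChristoffel (A B C : ℝ → ℝ) : Fin 2 → Fin 2 → Fin 2 → ℝ → ℝ :=
  ![![![A, 0], ![0, B]], ![![0, C], ![C, 0]]]

theorem christoffel_diagMetric {E' G' : ℝ → ℝ} (hE : HasDerivAt E (E' (p 0)) (p 0))
    (hG : HasDerivAt G (G' (p 0)) (p 0)) (k i j : Fin 2) :
    christoffel (diagMetric E G) (diagMetricInv E G) k i j p =
      diagChristoffel (fun t => E' t / (2 * E t)) (fun t => -G' t / (2 * E t))
        (fun t => G' t / (2 * G t)) k i j (p 0) := by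
  fin_cases k <;> fin_cases i <;> fin_cases j <;>
    simp [christoffel, Fin.sum_univ_two, diagMetric, diagMetricInv, diagChristoffel,
      pd_comp_apply_self hE, pd_comp_apply_self hG, pd_comp_apply_of_ne, pd_const] <;> ring

/- No derivative of `A` is needed: `∂₀Γ⁰₀₀` cancels in `R₀₀`, and `∂₁` of a function of `x`
vanishes whether or not it is differentiable. -/
theorem ricci_eq_of_christoffel_eventuallyEq {g ginv : (Fin 2 → ℝ) → Matrix (Fin 2) (Fin 2) ℝ}
    {A B C : ℝ → ℝ} {B' C' : ℝ}
    (hΓ : ∀ k i j, christoffel g ginv k i j =ᶠ[𝓝 p] fun y => diagChristoffel A B C k i j (y 0))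
    (hB : HasDerivAt B B' (p 0)) (hC : HasDerivAt C C' (p 0)) (i j : Fin 2) :
    ricci g ginv i j p =
      !![-C' + A (p 0) * C (p 0) - C (p 0) ^ 2, 0;
        0, B' + A (p 0) * B (p 0) - B (p 0) * C (p 0)] i j := by
  have hpd : ∀ l k i j, pd l (christoffel g ginv k i j) p =
      pd l (fun y => diagChristoffel A B C k i j (y 0)) p :=
    fun l k i j => pd_congr_of_eventuallyEq (hΓ k i j) l
  have hval : ∀ k i j, christoffel g ginv k i j p = diagChristoffel A B C k i j (p 0) :=
    fun k i j => (hΓ k i j).eq_of_nhds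
  fin_cases i <;> fin_cases j <;>
    simp [ricci, Fin.sum_univ_two, hpd, hval, diagChristoffel, pd_comp_apply_self hB,
      pd_comp_apply_self hC, pd_comp_apply_of_ne, pd_const] <;> ring

/-- Gauss's formula `K = -(G_x / √(EG))_x / (2√(EG))` for the metric `E dx² + G dφ²`. -/
def diagGaussCurvature (E E' G G' G'' : ℝ) : ℝ :=
  -G'' / (2 * E * G) + G' ^ 2 / (4 * E * G ^ 2) + E' * G' / (4 * E ^ 2 * G)

theorem ricci_diagMetric {E' G' : ℝ → ℝ} {G'' : ℝ} (hE : ∀ᶠ t in 𝓝 (p 0), HasDerivAt E (E' t) t)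
    (hG : ∀ᶠ t in 𝓝 (p 0), HasDerivAt G (G' t) t) (hG' : HasDerivAt G' G'' (p 0))
    (hE0 : E (p 0) ≠ 0) (hG0 : G (p 0) ≠ 0) (i j : Fin 2) :
    ricci (diagMetric E G) (diagMetricInv E G) i j p =
      diagGaussCurvature (E (p 0)) (E' (p 0)) (G (p 0)) (G' (p 0)) G'' * diagMetric E G p i j := by
  have hΓ : ∀ k i j, christoffel (diagMetric E G) (diagMetricInv E G) k i j =ᶠ[𝓝 p]
      fun y => diagChristoffel (fun t => E' t / (2 * E t)) (fun t => -G' t / (2 * E t))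
        (fun t => G' t / (2 * G t)) k i j (y 0) := by
    intro k i j
    filter_upwards [((continuous_apply 0).tendsto p).eventually hE,
      ((continuous_apply 0).tendsto p).eventually hG] with y hEy hGy
    exact christoffel_diagMetric hEy hGy k i j
  have hB := hG'.fun_neg.fun_div (hE.self_of_nhds.const_mul 2) (by positivity)
  have hC := hG'.fun_div (hG.self_of_nhds.const_mul 2) (by positivity)
  rw [ricci_eq_of_christoffel_eventuallyEq hΓ hB hC]
  fin_cases i <;> fin_cases j <;> simp [diagMetric, diagGaussCurvature] <;> field_simp <;> ring

theorem lieMetric_diagMetric {V : Fin 2 → (Fin 2 → ℝ) → ℝ} {u v : ℝ → ℝ} {E' G' u' v' : ℝ}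
    (hE : HasDerivAt E E' (p 0)) (hG : HasDerivAt G G' (p 0))
    (hu : HasDerivAt u u' (p 0)) (hv : HasDerivAt v v' (p 0))
    (hV₀ : V 0 =ᶠ[𝓝 p] fun y => u (y 0)) (hV₁ : V 1 =ᶠ[𝓝 p] fun y => v (y 0)) (i j : Fin 2) :
    lieMetric (diagMetric E G) V i j p =
      !![u (p 0) * E' + 2 * E (p 0) * u', G (p 0) * v'; G (p 0) * v', u (p 0) * G'] i j := by
  have hpd₀ := pd_congr_of_eventuallyEq hV₀
  have hpd₁ := pd_congr_of_eventuallyEq hV₁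
  fin_cases i <;> fin_cases j <;>
    simp [lieMetric, Fin.sum_univ_two, diagMetric, hpd₀, hpd₁, hV₀.eq_of_nhds, hV₁.eq_of_nhds,
      pd_comp_apply_self hE, pd_comp_apply_self hG, pd_comp_apply_self hu, pd_comp_apply_self hv,
      pd_comp_apply_of_ne, pd_const]
  ring

end DiagonalMetric

namespace Kerr

variable (a : ℝ)

def horizonE (t : ℝ) : ℝ := a ^ 2 * (1 + t ^ 2) / (1 - t ^ 2)

def horizonG (t : ℝ) : ℝ := 4 * a ^ 2 * (1 - t ^ 2) / (1 + t ^ 2)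

theorem kerrMetric_eq : kerrMetric a = diagMetric (horizonE a) (horizonG a) := rfl

theorem kerrMetricInv_eq : kerrMetricInv a = diagMetricInv (horizonE a) (horizonG a) := by
  funext p
  simp [kerrMetricInv, diagMetricInv, horizonE, horizonG]

theorem hasDerivAt_horizonE {t : ℝ} (ht : 1 - t ^ 2 ≠ 0) :
    HasDerivAt (horizonE a) (4 * a ^ 2 * t / (1 - t ^ 2) ^ 2) t := by
  unfold horizonE
  have h := (((hasDerivAt_pow 2 t).const_add 1).const_mul (a ^ 2)).div
    ((hasDerivAt_pow 2 t).const_sub 1) ht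
  refine h.congr_deriv ?_
  field_simp
  ring

theorem hasDerivAt_horizonG (t : ℝ) :
    HasDerivAt (horizonG a) (-16 * a ^ 2 * t / (1 + t ^ 2) ^ 2) t := by
  unfold horizonG
  have h := (((hasDerivAt_pow 2 t).const_sub 1).const_mul (4 * a ^ 2)).div
    ((hasDerivAt_pow 2 t).const_add 1) (by positivity)
  refine h.congr_deriv ?_
  field_simp
  ring

theorem hasDerivAt_deriv_horizonG (t : ℝ) :
    HasDerivAt (fun t => -16 * a ^ 2 * t / (1 + t ^ 2) ^ 2)
      (-16 * a ^ 2 * (1 - 3 * t ^ 2) / (1 + t ^ 2) ^ 3) t := by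
  have h := ((hasDerivAt_id' t).const_mul (-16 * a ^ 2)).div
    (((hasDerivAt_pow 2 t).const_add 1).fun_pow 2) (by positivity)
  refine h.congr_deriv ?_
  field_simp
  ring

theorem ricci_kerrMetric (ha : a ≠ 0) {p : Fin 2 → ℝ} (hx : p 0 ∈ Set.Ioo (-1 : ℝ) 1)
    (i j : Fin 2) :
    ricci (kerrMetric a) (kerrMetricInv a) i j p =
      2 * (1 - 3 * p 0 ^ 2) / (a ^ 2 * (1 + p 0 ^ 2) ^ 3) * kerrMetric a p i j := by
  have hx₀ := one_sub_sq_ne_zero_of_mem_Ioo hx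
  have hE : ∀ᶠ t in 𝓝 (p 0), HasDerivAt (horizonE a) (4 * a ^ 2 * t / (1 - t ^ 2) ^ 2) t := by
    filter_upwards [isOpen_Ioo.mem_nhds hx] with t ht
    exact hasDerivAt_horizonE a (one_sub_sq_ne_zero_of_mem_Ioo ht)
  have hE₀ : horizonE a (p 0) ≠ 0 := by unfold horizonE; positivity
  have hG₀ : horizonG a (p 0) ≠ 0 := by unfold horizonG; positivity
  rw [kerrMetric_eq, kerrMetricInv_eq, ricci_diagMetric hE
    (Eventually.of_forall (hasDerivAt_horizonG a)) (hasDerivAt_deriv_horizonG a (p 0)) hE₀ hG₀]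
  congr 1
  unfold diagGaussCurvature horizonE horizonG
  field_simp
  ring

theorem pd_zero_kerrGamma (y : Fin 2 → ℝ) : pd 0 kerrGamma y = y 0 := by
  have h : HasDerivAt (fun t : ℝ => (1 + t ^ 2) / 2) (y 0) (y 0) := by
    simpa using ((hasDerivAt_pow 2 (y 0)).const_add 1).div_const 2
  exact pd_comp_apply_self h

theorem pd_one_kerrGamma (y : Fin 2 → ℝ) : pd 1 kerrGamma y = 0 :=
  pd_comp_apply_of_ne (by decide) (fun t => (1 + t ^ 2) / 2)

theorem kerrXflat_zero (y : Fin 2 → ℝ) : kerrXflat a 0 y = -2 * y 0 / (1 + y 0 ^ 2) := by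
  simp [kerrXflat, kerrKflat, kerrMetric, kerrK, pd_zero_kerrGamma, kerrGamma, Fin.sum_univ_two]
  field_simp

theorem kerrXflat_one (ha : a ≠ 0) (y : Fin 2 → ℝ) :
    kerrXflat a 1 y = 4 * (1 - y 0 ^ 2) / (1 + y 0 ^ 2) ^ 2 := by
  simp [kerrXflat, kerrKflat, kerrMetric, kerrK, pd_one_kerrGamma, kerrGamma, Fin.sum_univ_two]
  field_simp

theorem raise_kerrXflat_zero (y : Fin 2 → ℝ) :
    raise (kerrMetricInv a) (kerrXflat a) 0 y =
      -2 * y 0 * (1 - y 0 ^ 2) / (a ^ 2 * (1 + y 0 ^ 2) ^ 2) := by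
  simp [raise, kerrMetricInv, kerrXflat_zero, Fin.sum_univ_two]
  field_simp

theorem raise_kerrXflat_one (ha : a ≠ 0) {y : Fin 2 → ℝ} (hy : 1 - y 0 ^ 2 ≠ 0) :
    raise (kerrMetricInv a) (kerrXflat a) 1 y = 1 / (a ^ 2 * (1 + y 0 ^ 2)) := by
  simp [raise, kerrMetricInv, kerrXflat_one a ha, Fin.sum_univ_two]
  field_simp

theorem hasDerivAt_raise_kerrXflat_zero (ha : a ≠ 0) (t : ℝ) :
    HasDerivAt (fun t => -2 * t * (1 - t ^ 2) / (a ^ 2 * (1 + t ^ 2) ^ 2))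
      (-2 * (1 - 6 * t ^ 2 + t ^ 4) / (a ^ 2 * (1 + t ^ 2) ^ 3)) t := by
  have h := (((hasDerivAt_id' t).const_mul (-2)).fun_mul ((hasDerivAt_pow 2 t).const_sub 1)).div
    ((((hasDerivAt_pow 2 t).const_add 1).fun_pow 2).const_mul (a ^ 2)) (by positivity)
  refine h.congr_deriv ?_
  field_simp
  ring

theorem hasDerivAt_raise_kerrXflat_one (ha : a ≠ 0) (t : ℝ) :
    HasDerivAt (fun t => 1 / (a ^ 2 * (1 + t ^ 2))) (-2 * t / (a ^ 2 * (1 + t ^ 2) ^ 2)) t := by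
  have h := (hasDerivAt_const t (1 : ℝ)).div
    (((hasDerivAt_pow 2 t).const_add 1).const_mul (a ^ 2)) (by positivity)
  refine h.congr_deriv ?_
  field_simp
  ring

/-- The extremal Kerr horizon data satisfies the horizon Einstein
equation $\mathrm{Ric}(g) = ½ X^♭ ⊗ X^♭ - ½ \mathcal{L}_X g$ (zero cosmological
constant) at every point of the coordinate chart $(x,φ)$ with $x ∈ (-1,1)$. -/
theorem kerr_horizon_einstein (ha : 0 < a) (p : Fin 2 → ℝ) (hx : p 0 ∈ Set.Ioo (-1 : ℝ) 1) :
    HorizonEq (kerrMetric a) (kerrMetricInv a) (kerrXflat a) 0 p := by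
  have ha₀ : a ≠ 0 := ha.ne'
  have hx₀ := one_sub_sq_ne_zero_of_mem_Ioo hx
  have hX₁ : raise (kerrMetricInv a) (kerrXflat a) 1 =ᶠ[𝓝 p]
      fun y => 1 / (a ^ 2 * (1 + y 0 ^ 2)) := by
    filter_upwards [((continuous_apply 0).tendsto p).eventually (isOpen_Ioo.mem_nhds hx)]
      with y hy using raise_kerrXflat_one a ha₀ (one_sub_sq_ne_zero_of_mem_Ioo hy)
  intro i j
  rw [ricci_kerrMetric a ha₀ hx, kerrMetric_eq, lieMetric_diagMetric (hasDerivAt_horizonE a hx₀)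
    (hasDerivAt_horizonG a _) (hasDerivAt_raise_kerrXflat_zero a ha₀ _)
    (hasDerivAt_raise_kerrXflat_one a ha₀ _)
    (Eventually.of_forall (raise_kerrXflat_zero a)) hX₁]
  fin_cases i <;> fin_cases j <;>
    simp [kerrXflat_zero, kerrXflat_one a ha₀, diagMetric, horizonE, horizonG] <;>
    field_simp <;> ring

end Kerr
end
end

section
/- Every solution of the linear ODE B'' + (2/(β²+x²)²)( x(β²+x²) B' + 2β² B ) + 2λ = 0 with β ≠ 0 is of the form B(x) = ( b₁(β² - x²) + b₂ β x - (λ/3)(x⁴ + 3β⁴) ) / (β² + x²) for constants b₁, b₂. -/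
/-!
Put `u = (β² + x²) B + (λ/3)(x⁴ + 3β⁴)`. This substitution removes both the singular coefficients
and the forcing term: the equation becomes `(β² + x²) u'' = 2 (x u' - u)`. Since
`(x u' - u)' = x u''`, the functions `x u' - u` and `β² + x²` have vanishing Wronskian, so
`x u' - u = c (β² + x²)`. Hence `u'' = 2c`, `u` is quadratic, and evaluating at `0` forces
`u = c (x² - β²) + b x`.
-/

theorem sub_eq_sub_of_hasDerivAt {f g f' : ℝ → ℝ} (hf : ∀ x, HasDerivAt f (f' x) x)
    (hg : ∀ x, HasDerivAt g (f' x) x) (x y : ℝ) : f x - g x = f y - g y := by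
  have hfg : ∀ x, HasDerivAt (fun x => f x - g x) 0 x := fun x => by
    simpa using (hf x).fun_sub (hg x)
  exact is_const_of_deriv_eq_zero (fun x => (hfg x).differentiableAt)
    (fun x => (hfg x).deriv) x y

theorem exists_eq_const_mul_of_wronskian_eq_zero {f f' g g' : ℝ → ℝ}
    (hf : ∀ x, HasDerivAt f (f' x) x) (hg : ∀ x, HasDerivAt g (g' x) x) (hg0 : ∀ x, g x ≠ 0)
    (hw : ∀ x, f' x * g x = f x * g' x) : ∃ c, ∀ x, f x = c * g x := by
  have hquot : ∀ x, HasDerivAt (fun x => f x / g x) 0 x := fun x => by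
    simpa [hw x] using (hf x).fun_div (hg x) (hg0 x)
  refine ⟨f 0 / g 0, fun x => ?_⟩
  have := is_const_of_deriv_eq_zero (fun x => (hquot x).differentiableAt)
    (fun x => (hquot x).deriv) x 0
  rw [← this, div_mul_cancel₀ _ (hg0 x)]

theorem eq_quadratic_of_hasDerivAt_const {u u' : ℝ → ℝ} {c : ℝ}
    (hu : ∀ x, HasDerivAt u (u' x) x) (hu' : ∀ x, HasDerivAt u' c x) (x : ℝ) :
    u x = u 0 + u' 0 * x + c / 2 * x ^ 2 := by
  have hu'_affine : ∀ x, u' x = u' 0 + c * x := fun x => by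
    have := sub_eq_sub_of_hasDerivAt hu' (fun x => (hasDerivAt_mul_const c).const_add (u' 0)) x 0
    linarith
  have hquad : ∀ x, HasDerivAt (fun x => u 0 + u' 0 * x + c / 2 * x ^ 2) (u' x) x := fun x => by
    refine (((hasDerivAt_id' x).const_mul (u' 0)).const_add (u 0) |>.fun_add
      ((hasDerivAt_pow 2 x).const_mul (c / 2))).congr_deriv ?_
    rw [hu'_affine x]
    push_cast
    ring
  linear_combination sub_eq_sub_of_hasDerivAt hu hquad x 0

def SolvesReducedODE (a : ℝ) (u : ℝ → ℝ) : Prop :=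
  ∃ u' u'' : ℝ → ℝ, (∀ x, HasDerivAt u (u' x) x) ∧ (∀ x, HasDerivAt u' (u'' x) x) ∧
    ∀ x, (a + x ^ 2) * u'' x = 2 * (x * u' x - u x)

theorem SolvesReducedODE.exists_eq {a : ℝ} (ha : 0 < a) {u : ℝ → ℝ} (hu : SolvesReducedODE a u) :
    ∃ c b : ℝ, ∀ x, u x = c * (x ^ 2 - a) + b * x := by
  obtain ⟨u', u'', hu, hu', hode⟩ := hu
  have hP : ∀ x : ℝ, a + x ^ 2 ≠ 0 := fun x => by positivity
  have hk : ∀ x, HasDerivAt (fun x => x * u' x - u x) (x * u'' x) x := fun x => by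
    refine (((hasDerivAt_id' x).fun_mul (hu' x)).fun_sub (hu x)).congr_deriv ?_
    ring
  have hP' : ∀ x, HasDerivAt (fun x : ℝ => a + x ^ 2) (2 * x) x := fun x => by
    simpa using (hasDerivAt_pow 2 x).const_add a
  obtain ⟨c, hc⟩ := exists_eq_const_mul_of_wronskian_eq_zero hk hP' hP
    (fun x => by linear_combination x * hode x)
  have hu'' : ∀ x, HasDerivAt u' (2 * c) x := fun x => by
    convert hu' x using 1
    exact mul_left_cancel₀ (hP x) (by linear_combination -(hode x) - 2 * hc x)
  exact ⟨c, u' 0, fun x => by linear_combination eq_quadratic_of_hasDerivAt_const hu hu'' x - hc 0⟩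

theorem solvesReducedODE_of_ode {a lam : ℝ} {B B' B'' : ℝ → ℝ} (hB : ∀ x, HasDerivAt B (B' x) x)
    (hB' : ∀ x, HasDerivAt B' (B'' x) x)
    (hode : ∀ x, (a + x ^ 2) ^ 2 * B'' x + 2 * (x * (a + x ^ 2) * B' x + 2 * a * B x)
      + 2 * lam * (a + x ^ 2) ^ 2 = 0) :
    SolvesReducedODE a (fun x => (a + x ^ 2) * B x + lam / 3 * (x ^ 4 + 3 * a ^ 2)) := by
  have hP : ∀ x, HasDerivAt (fun x : ℝ => a + x ^ 2) (2 * x) x := fun x => by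
    simpa using (hasDerivAt_pow 2 x).const_add a
  refine ⟨fun x => 2 * x * B x + (a + x ^ 2) * B' x + 4 * lam / 3 * x ^ 3,
    fun x => 2 * B x + 4 * x * B' x + (a + x ^ 2) * B'' x + 4 * lam * x ^ 2,
    fun x => ?_, fun x => ?_, fun x => by linear_combination hode x⟩
  · refine (((hP x).fun_mul (hB x)).fun_add
      (((hasDerivAt_pow 4 x).add_const _).const_mul (lam / 3))).congr_deriv ?_
    push_cast
    ring
  · refine ((((hasDerivAt_id' x).const_mul 2).fun_mul (hB x)).fun_add ((hP x).fun_mul (hB' x))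
      |>.fun_add ((hasDerivAt_pow 3 x).const_mul (4 * lam / 3))).congr_deriv ?_
    push_cast
    ring

/-- Every (twice differentiable) solution of the linear ODE
$B'' + \frac{2}{(β²+x²)²}( x(β²+x²) B' + 2β² B ) + 2λ = 0$ with $β ≠ 0$ is of the form
$B(x) = \frac{b₁(β² - x²) + b₂ β x - (λ/3)(x⁴ + 3β⁴)}{β² + x²}$ for constants $b₁, b₂$. -/
theorem ode_general_solution (β lam : ℝ) (hβ : β ≠ 0) (B : ℝ → ℝ)
    (hB : Differentiable ℝ B) (hB' : Differentiable ℝ (deriv B))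
    (hode : ∀ x : ℝ, deriv (deriv B) x
      + (2 / (β^2 + x^2)^2) * (x * (β^2 + x^2) * deriv B x + 2 * β^2 * B x)
      + 2 * lam = 0) :
    ∃ b₁ b₂ : ℝ, ∀ x : ℝ,
      B x = (b₁ * (β^2 - x^2) + b₂ * β * x - (lam / 3) * (x^4 + 3 * β^4))
              / (β^2 + x^2) := by
  have hP : ∀ x : ℝ, β ^ 2 + x ^ 2 ≠ 0 := fun x => by positivity
  have hreduced := solvesReducedODE_of_ode (a := β ^ 2) (lam := lam)
    (fun x => (hB x).hasDerivAt) (fun x => (hB' x).hasDerivAt) fun x => by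
      have := hode x
      field_simp [hP x] at this
      linear_combination this
  obtain ⟨c, b, hu⟩ := hreduced.exists_eq (by positivity)
  refine ⟨-c, b / β, fun x => ?_⟩
  rw [eq_div_iff (hP x)]
  rw [div_mul_cancel₀ b hβ]
  linear_combination hu x
end
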